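/- arXiv:1411.5237 — 4 statements merged into one kernel-verified Lean document; each statement's English description precedes it below -/
import Mathlib

section
/- Let G : V → L₂(V, V̂) be three times Fréchet differentiable with ‖D²G‖ ≤ c_{D²G} and ‖D³G‖ ≤ c_{D³G}. Then for all u₁, u₂, v₁, v₂ ∈ V: ‖G(u₁)-G(u₂)-DG(u₂)(u₁-u₂) - (G(v₁)-G(v₂)-DG(v₂)(v₁-v₂))‖_{L₂(V,V̂)} ≤ c_{D²G}(|u₁-u₂|+|v₁-v₂|)·|u₁-v₁-(u₂-v₂)| + c_{D³G}|v₁-v₂|·|u₂-v₂|·(|u₁-u₂| + |u₁-v₁-(u₂-v₂)|). -/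
set_option maxSynthPendingDepth 3

/-!
Write `k = v₁ - v₂` and `d = u₁ - v₁ - (u₂ - v₂)`, so that `v₁ = v₂ + k` and `u₁ = (u₂ + k) + d`.
The expression splits as `A + B` with
`A = G u₁ - G (u₂ + k) - DG u₂ d` and `B = g u₂ - g v₂`, where `g x = G (x + k) - G x - DG x k`.
The mean value inequality for `G - DG u₂` on the ball of radius `‖u₁ - u₂‖ + ‖k‖` around `u₂`
bounds `A`. By symmetry of `D²G`, the derivative of `g` is `DG (x + k) - DG x - D²G x k`, a Taylor
remainder of `DG` of size at most `c_{D³G} ‖k‖²`; hence `g` is Lipschitz, which bounds `B`.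
Finally `‖k‖ ≤ ‖u₁ - u₂‖ + ‖d‖`.
-/

open Metric

section MeanValue

variable {E F : Type*} [NormedAddCommGroup E] [NormedSpace ℝ E]
  [NormedAddCommGroup F] [NormedSpace ℝ F]
  {f : E → F} {f' : E → E →L[ℝ] F} {f'' : E → E →L[ℝ] E →L[ℝ] F} {C : ℝ}

theorem norm_image_sub_le_of_forall_hasFDerivAt (hf : ∀ x, HasFDerivAt f (f' x) x)
    (bound : ∀ x, ‖f' x‖ ≤ C) (x y : E) : ‖f y - f x‖ ≤ C * ‖y - x‖ :=
  convex_univ.norm_image_sub_le_of_norm_hasFDerivWithin_le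
    (fun z _ => (hf z).hasFDerivWithinAt) (fun z _ => bound z) (Set.mem_univ x) (Set.mem_univ y)

theorem norm_image_sub_sub_fderiv_le_of_mem_closedBall (hf : ∀ x, HasFDerivAt f (f' x) x)
    (hf' : ∀ x, HasFDerivAt f' (f'' x) x) (bound : ∀ x, ‖f'' x‖ ≤ C)
    {a x y : E} {r : ℝ} (hx : x ∈ closedBall a r) (hy : y ∈ closedBall a r) :
    ‖f y - f x - f' a (y - x)‖ ≤ C * r * ‖y - x‖ := by
  have hC : 0 ≤ C := (norm_nonneg _).trans (bound a)
  refine (convex_closedBall a r).norm_image_sub_le_of_norm_hasFDerivWithin_le'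
    (fun z _ => (hf z).hasFDerivWithinAt) (fun z hz => ?_) hx hy
  calc ‖f' z - f' a‖ ≤ C * ‖z - a‖ := norm_image_sub_le_of_forall_hasFDerivAt hf' bound a z
    _ ≤ C * r := by
      gcongr
      rwa [← dist_eq_norm, ← mem_closedBall]

theorem hasFDerivAt_image_add_sub_image_sub_fderiv_apply (hf : ∀ x, HasFDerivAt f (f' x) x)
    (hf' : ∀ x, HasFDerivAt f' (f'' x) x) (k x : E) :
    HasFDerivAt (fun z => f (z + k) - f z - f' z k) (f' (x + k) - f' x - f'' x k) x := by
  have hshift : HasFDerivAt (fun z => f (z + k)) (f' (x + k)) x := by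
    simpa [Function.comp_def] using (hf (x + k)).comp x ((hasFDerivAt_id x).add_const k)
  have happly : HasFDerivAt (fun z => f' z k) ((f'' x).flip k) x := by
    simpa using (hf' x).clm_apply (hasFDerivAt_const k x)
  have hsymm : (f'' x).flip k = f'' x k := by
    ext w
    exact second_derivative_symmetric hf (hf' x) w k
  rw [← hsymm]
  exact (hshift.sub (hf x)).sub happly

theorem norm_image_add_sub_image_sub_fderiv_apply_sub_le
    {f''' : E → E →L[ℝ] E →L[ℝ] E →L[ℝ] F} (hf : ∀ x, HasFDerivAt f (f' x) x)
    (hf' : ∀ x, HasFDerivAt f' (f'' x) x) (hf'' : ∀ x, HasFDerivAt f'' (f''' x) x)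
    (bound : ∀ x, ‖f''' x‖ ≤ C) (k x y : E) :
    ‖(f (y + k) - f y - f' y k) - (f (x + k) - f x - f' x k)‖ ≤ C * ‖k‖ * ‖k‖ * ‖y - x‖ := by
  refine norm_image_sub_le_of_forall_hasFDerivAt
    (hasFDerivAt_image_add_sub_image_sub_fderiv_apply hf hf' k) (fun z => ?_) x y
  simpa using norm_image_sub_sub_fderiv_le_of_mem_closedBall hf' hf'' bound
    (mem_closedBall_self (norm_nonneg k)) (x := z) (y := z + k) (by simp)

end MeanValue

theorem stmt_5_general {V W : Type*} [NormedAddCommGroup V] [InnerProductSpace ℝ V]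
    [NormedAddCommGroup W] [NormedSpace ℝ W]
    (G : V → W) (DG : V → V →L[ℝ] W) (D2G : V → V →L[ℝ] V →L[ℝ] W)
    (D3G : V → V →L[ℝ] V →L[ℝ] V →L[ℝ] W) (cD2G cD3G : ℝ)
    (hG : ∀ u, HasFDerivAt G (DG u) u) (hDG : ∀ u, HasFDerivAt DG (D2G u) u)
    (hD2G : ∀ u, HasFDerivAt D2G (D3G u) u)
    (hD2Gb : ∀ u, ‖D2G u‖ ≤ cD2G) (hD3Gb : ∀ u, ‖D3G u‖ ≤ cD3G)
    (u₁ u₂ v₁ v₂ : V) :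
    ‖G u₁ - G u₂ - DG u₂ (u₁ - u₂) - (G v₁ - G v₂ - DG v₂ (v₁ - v₂))‖
      ≤ cD2G * (‖u₁ - u₂‖ + ‖v₁ - v₂‖) * ‖u₁ - v₁ - (u₂ - v₂)‖
        + cD3G * ‖v₁ - v₂‖ * ‖u₂ - v₂‖ * (‖u₁ - u₂‖ + ‖u₁ - v₁ - (u₂ - v₂)‖) := by
  set k := v₁ - v₂
  set d := u₁ - v₁ - (u₂ - v₂)
  have hu₁ : u₁ = u₂ + k + d := by simp only [k, d]; abel
  have hv₁ : v₁ = v₂ + k := by simp only [k]; abel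
  have hdiff : u₁ - u₂ = k + d := by rw [hu₁]; abel
  have hA : ‖G u₁ - G (u₂ + k) - DG u₂ d‖ ≤ cD2G * (‖u₁ - u₂‖ + ‖k‖) * ‖d‖ := by
    have := norm_image_sub_sub_fderiv_le_of_mem_closedBall hG hDG hD2Gb
      (a := u₂) (x := u₂ + k) (y := u₁) (r := ‖u₁ - u₂‖ + ‖k‖)
      (by simp) (by simp [dist_eq_norm])
    rwa [show u₁ - (u₂ + k) = d by rw [hu₁, add_sub_cancel_left]] at this
  have hB := norm_image_add_sub_image_sub_fderiv_apply_sub_le hG hDG hD2G hD3Gb k v₂ u₂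
  have hk : ‖k‖ ≤ ‖u₁ - u₂‖ + ‖d‖ := by
    simpa [hdiff] using norm_sub_le (u₁ - u₂) d
  have hcD3G : 0 ≤ cD3G := (norm_nonneg _).trans (hD3Gb u₁)
  calc _ = ‖(G u₁ - G (u₂ + k) - DG u₂ d)
          + ((G (u₂ + k) - G u₂ - DG u₂ k) - (G (v₂ + k) - G v₂ - DG v₂ k))‖ := by
        rw [hdiff, map_add, ← hv₁]
        abel_nf
    _ ≤ cD2G * (‖u₁ - u₂‖ + ‖k‖) * ‖d‖ + cD3G * ‖k‖ * ‖k‖ * ‖u₂ - v₂‖ :=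
        (norm_add_le _ _).trans (add_le_add hA hB)
    _ ≤ _ := by
        have hB' : cD3G * ‖k‖ * ‖k‖ * ‖u₂ - v₂‖ ≤ cD3G * ‖k‖ * ‖u₂ - v₂‖ * (‖u₁ - u₂‖ + ‖d‖) := by
          rw [mul_right_comm]
          gcongr
        linarith

/-- If G is three times Fréchet differentiable with ‖D²G‖ ≤ c_{D²G} and ‖D³G‖ ≤ c_{D³G}, then
‖G(u₁)-G(u₂)-DG(u₂)(u₁-u₂) - (G(v₁)-G(v₂)-DG(v₂)(v₁-v₂))‖
  ≤ c_{D²G}(|u₁-u₂|+|v₁-v₂|)|u₁-v₁-(u₂-v₂)|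
    + c_{D³G}|v₁-v₂||u₂-v₂|(|u₁-u₂| + |u₁-v₁-(u₂-v₂)|). -/
theorem stmt_5 {V W : Type*} [NormedAddCommGroup V] [InnerProductSpace ℝ V] [CompleteSpace V]
    [NormedAddCommGroup W] [NormedSpace ℝ W]
    (G : V → W) (DG : V → V →L[ℝ] W) (D2G : V → V →L[ℝ] V →L[ℝ] W)
    (D3G : V → V →L[ℝ] V →L[ℝ] V →L[ℝ] W) (cD2G cD3G : ℝ)
    (hG : ∀ u, HasFDerivAt G (DG u) u) (hDG : ∀ u, HasFDerivAt DG (D2G u) u)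
    (hD2G : ∀ u, HasFDerivAt D2G (D3G u) u)
    (hD2Gb : ∀ u, ‖D2G u‖ ≤ cD2G) (hD3Gb : ∀ u, ‖D3G u‖ ≤ cD3G)
    (u₁ u₂ v₁ v₂ : V) :
    ‖G u₁ - G u₂ - DG u₂ (u₁ - u₂) - (G v₁ - G v₂ - DG v₂ (v₁ - v₂))‖
      ≤ cD2G * (‖u₁ - u₂‖ + ‖v₁ - v₂‖) * ‖u₁ - v₁ - (u₂ - v₂)‖
        + cD3G * ‖v₁ - v₂‖ * ‖u₂ - v₂‖ * (‖u₁ - u₂‖ + ‖u₁ - v₁ - (u₂ - v₂)‖) :=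
  stmt_5_general G DG D2G D3G cD2G cD3G hG hDG hD2G hD2Gb hD3Gb u₁ u₂ v₁ v₂
end

section
/- Let V, V̂ be separable Hilbert spaces such that the embedding V̂ ⊂ V is Hilbert–Schmidt with norm c_{V,V̂}. Fix u ∈ V. Then the linear map Φ : L₂(V, V̂) → V defined by Φ(E) = E u (composing E with the embedding into V) is Hilbert–Schmidt, with ‖Φ‖_{HS} ≤ c_{V,V̂} |u|. -/
/-! The basis operators `E_{ij} = ⟪eⱼ, ·⟫ fᵢ` send `u` to `⟪eⱼ, u⟫ fᵢ`, so the Hilbert–Schmidt sum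
of `Φ` factors as `(∑ᵢ ‖J fᵢ‖²) (∑ⱼ ⟪eⱼ, u⟫²) = c² ‖u‖²` by Parseval's identity. -/

theorem ENNReal.toReal_tsum_ofReal {γ : Type*} {g : γ → ℝ} (hg : ∀ k, 0 ≤ g k) :
    (∑' k, ENNReal.ofReal (g k)).toReal = ∑' k, g k := by
  rw [ENNReal.tsum_toReal_eq fun _ => ENNReal.ofReal_ne_top]
  exact tsum_congr fun k => ENNReal.toReal_ofReal (hg k)

/-- Unlike `Summable.tsum_mul_tsum`, no summability is needed: both sides are `toReal` of the same
sum in `ℝ≥0∞`, so a divergent sum gives the junk value `0` on both sides. -/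
theorem tsum_mul_tsum_of_nonneg {α β : Type*} {a : α → ℝ} {b : β → ℝ} (ha : ∀ i, 0 ≤ a i)
    (hb : ∀ j, 0 ≤ b j) : (∑' i, a i) * (∑' j, b j) = ∑' p : α × β, a p.1 * b p.2 := by
  rw [← ENNReal.toReal_tsum_ofReal ha, ← ENNReal.toReal_tsum_ofReal hb,
    ← ENNReal.toReal_tsum_ofReal (g := fun p : α × β => a p.1 * b p.2)
      fun p => mul_nonneg (ha p.1) (hb p.2),
    ← ENNReal.toReal_mul, ← ENNReal.tsum_mul_right, ENNReal.tsum_prod']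
  simp only [ENNReal.ofReal_mul (ha _), ENNReal.tsum_mul_left]

theorem HilbertBasis.tsum_inner_sq {ι E : Type*} [NormedAddCommGroup E] [InnerProductSpace ℝ E]
    (b : HilbertBasis ι ℝ E) (x : E) : ∑' i, inner ℝ (b i) x ^ 2 = ‖x‖ ^ 2 := by
  rw [← real_inner_self_eq_norm_sq, ← b.tsum_inner_mul_inner x x]
  exact tsum_congr fun i => by rw [sq, real_inner_comm x (b i)]

theorem stmt_12_general {V Vh : Type*} [NormedAddCommGroup V] [InnerProductSpace ℝ V] [CompleteSpace V]
    [NormedAddCommGroup Vh] [InnerProductSpace ℝ Vh] [CompleteSpace Vh]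
    (e : HilbertBasis ℕ ℝ V) (f : HilbertBasis ℕ ℝ Vh)
    (J : Vh →L[ℝ] V) (c : ℝ) (hJ : ∑' i, ‖J (f i)‖ ^ 2 = c ^ 2)
    (u : V) :
    ∑' p : ℕ × ℕ, ‖J (((innerSL ℝ (e p.2)).smulRight (f p.1)) u)‖ ^ 2 ≤ (c * ‖u‖) ^ 2 := by
  have basis_image (p : ℕ × ℕ) : ‖J (((innerSL ℝ (e p.2)).smulRight (f p.1)) u)‖ ^ 2
      = ‖J (f p.1)‖ ^ 2 * inner ℝ (e p.2) u ^ 2 := by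
    rw [ContinuousLinearMap.smulRight_apply, innerSL_apply_apply, map_smul, norm_smul, mul_pow,
      Real.norm_eq_abs, sq_abs, mul_comm]
  rw [tsum_congr basis_image, ← tsum_mul_tsum_of_nonneg (a := fun i => ‖J (f i)‖ ^ 2)
    (b := fun j => inner ℝ (e j) u ^ 2) (fun _ => sq_nonneg _) (fun _ => sq_nonneg _),
    hJ, e.tsum_inner_sq, mul_pow]

/-- Let V, V̂ be separable Hilbert spaces with orthonormal bases (eⱼ), (fᵢ), and let the embedding
J : V̂ → V be Hilbert–Schmidt with HS norm c, i.e. Σᵢ ‖J fᵢ‖² = c². Fix u ∈ V. Then the map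
Φ : L₂(V,V̂) → V, E ↦ J(E u), is Hilbert–Schmidt with ‖Φ‖_HS ≤ c|u|: evaluating Φ on the
orthonormal basis E_{ij} = ⟪eⱼ,·⟫ fᵢ of L₂(V,V̂), the squares sum to at most (c|u|)². -/
theorem stmt_12 {V Vh : Type*} [NormedAddCommGroup V] [InnerProductSpace ℝ V] [CompleteSpace V]
    [NormedAddCommGroup Vh] [InnerProductSpace ℝ Vh] [CompleteSpace Vh]
    (e : HilbertBasis ℕ ℝ V) (f : HilbertBasis ℕ ℝ Vh)
    (J : Vh →L[ℝ] V) (c : ℝ) (hc0 : 0 ≤ c) (hJ : ∑' i, ‖J (f i)‖ ^ 2 = c ^ 2)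
    (u : V) :
    ∑' p : ℕ × ℕ, ‖J (((innerSL ℝ (e p.2)).smulRight (f p.1)) u)‖ ^ 2 ≤ (c * ‖u‖) ^ 2 :=
  stmt_12_general e f J c hJ u
end

section
/- Let 0 < α < β ≤ 1, u ∈ C_{β,∼}([0,T]; V) and 0 ≤ s < r ≤ T. Then the fractional derivative D^α_{s+}u[r] = (1/Γ(1-α))( u(r)/(r-s)^α + α ∫_s^r (u(r)-u(q))/(r-q)^{1+α} dq ) is well defined and satisfies |D^α_{s+}u[r]| ≤ c ‖u‖_{β,∼} (r-s)^{-α} for a constant c depending only on α, β, T. -/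
open MeasureTheory Set Real

/-!
Split `[s, r]` at `m = max s (r / 2)`. On `[s, m]` the kernel `(r - q) ^ (-(1 + α))` is bounded
and `‖u r - u q‖ ≤ 2 K`. On `[m, r]` the weight satisfies `q ^ β ≥ m ^ β ≥ (r - m) ^ β`, so the
weighted Hölder condition gives `‖u r - u q‖ ≤ K (r - m) ^ (-β) (r - q) ^ β`, and the product with
the kernel is integrable because `β > α`. Both pieces are `O(K (r - m) ^ (-α))`, and
`r - m ≥ (r - s) / 2`.
-/

theorem integral_sub_rpow {γ : ℝ} (hγ : -1 < γ) (a b : ℝ) :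
    ∫ q in a..b, (b - q) ^ γ = (b - a) ^ (γ + 1) / (γ + 1) := by
  rw [intervalIntegral.integral_comp_sub_left (fun x => x ^ γ), sub_self,
    integral_rpow (Or.inl hγ), zero_rpow (by linarith), sub_zero]

theorem intervalIntegrable_sub_rpow {γ : ℝ} (hγ : -1 < γ) (a b : ℝ) :
    IntervalIntegrable (fun q => (b - q) ^ γ) volume a b := by
  simpa using
    (intervalIntegral.intervalIntegrable_rpow' hγ (a := b - a) (b := b - b)).comp_sub_left b

theorem integral_sub_rpow_neg_one_sub_le {α a m r : ℝ} (hα : 0 < α) (ham : a ≤ m) (hmr : m < r) :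
    ∫ q in a..m, (r - q) ^ (-(1 + α)) ≤ (r - m) ^ (-α) / α := by
  have h0 : (0 : ℝ) ∉ uIcc (r - m) (r - a) := by
    rw [uIcc_of_le (by linarith)]; exact fun h => by linarith [h.1]
  rw [intervalIntegral.integral_comp_sub_left (fun x => x ^ (-(1 + α))),
    integral_rpow (Or.inr ⟨by linarith, h0⟩), show -(1 + α) + 1 = -α by ring, div_neg,
    ← neg_div, neg_sub]
  gcongr
  exact sub_le_self _ (rpow_nonneg (by linarith) _)

theorem le_mul_rpow_neg_of_rpow_mul_le {β m q x A : ℝ} (hβ : 0 ≤ β) (hm : 0 < m) (hmq : m ≤ q)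
    (hx : 0 ≤ x) (h : q ^ β * x ≤ A) : x ≤ A * m ^ (-β) := by
  rw [rpow_neg hm.le, ← div_eq_mul_inv, le_div_iff₀ (rpow_pos_of_pos hm β), mul_comm]
  exact (mul_le_mul_of_nonneg_right (rpow_le_rpow hm.le hmq hβ) hx).trans h

theorem continuousOn_sub_rpow {γ a m r : ℝ} (hmr : m < r) :
    ContinuousOn (fun q => (r - q) ^ γ) (Icc a m) :=
  (continuous_const.sub continuous_id).continuousOn.rpow_const
    fun _ hq => Or.inl (sub_pos.2 (hq.2.trans_lt hmr)).ne'

theorem rpow_neg_mul_rpow_sub_le {α β d m : ℝ} (hβ : 0 ≤ β) (hd : 0 < d) (hdm : d ≤ m) :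
    m ^ (-β) * d ^ (β - α) ≤ d ^ (-α) := by
  calc m ^ (-β) * d ^ (β - α) ≤ d ^ (-β) * d ^ (β - α) :=
        mul_le_mul_of_nonneg_right (rpow_le_rpow_of_nonpos hd hdm (by linarith))
          (rpow_nonneg hd.le _)
    _ = d ^ (-α) := by rw [← rpow_add hd]; ring_nf

theorem rpow_neg_sub_max_half_le {α s r : ℝ} (hα : 0 ≤ α) (hs : 0 ≤ s) (hsr : s < r) :
    (r - max s (r / 2)) ^ (-α) ≤ 2 ^ α * (r - s) ^ (-α) := by
  have hhalf : (r - s) / 2 ≤ r - max s (r / 2) := by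
    rcases max_choice s (r / 2) with h | h <;> rw [h] <;> linarith
  calc (r - max s (r / 2)) ^ (-α) ≤ ((r - s) / 2) ^ (-α) :=
        rpow_le_rpow_of_nonpos (by linarith) hhalf (neg_nonpos.2 hα)
    _ = 2 ^ α * (r - s) ^ (-α) := by
        rw [div_rpow (by linarith) zero_le_two, rpow_neg zero_le_two, div_inv_eq_mul, mul_comm]

section

variable {V : Type*} [NormedAddCommGroup V] [NormedSpace ℝ V]

theorem intervalIntegrable_and_norm_integral_le_of_bounded {u : ℝ → V} {α a m r M : ℝ}
    (hα : 0 < α) (ham : a ≤ m) (hmr : m < r) (hu : ContinuousOn u (Icc a m))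
    (hM : ∀ q ∈ Icc a m, ‖u r - u q‖ ≤ M) :
    IntervalIntegrable (fun q => (r - q) ^ (-(1 + α)) • (u r - u q)) volume a m ∧
      ‖∫ q in a..m, (r - q) ^ (-(1 + α)) • (u r - u q)‖ ≤ M * (r - m) ^ (-α) / α := by
  have hM0 : 0 ≤ M := (norm_nonneg _).trans (hM a ⟨le_rfl, ham⟩)
  have hkernel := continuousOn_sub_rpow (γ := -(1 + α)) (a := a) hmr
  refine ⟨((hkernel.smul (continuousOn_const.sub hu)).intervalIntegrable_of_Icc ham), ?_⟩
  have hbound : ∀ q ∈ Ioc a m,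
      ‖(r - q) ^ (-(1 + α)) • (u r - u q)‖ ≤ M * (r - q) ^ (-(1 + α)) :=
    fun q hq => by
      have hkq : 0 ≤ (r - q) ^ (-(1 + α)) := rpow_nonneg (by linarith [hq.2]) _
      rw [norm_smul_of_nonneg hkq, mul_comm]
      exact mul_le_mul_of_nonneg_right (hM q (Ioc_subset_Icc_self hq)) hkq
  calc ‖∫ q in a..m, (r - q) ^ (-(1 + α)) • (u r - u q)‖
      ≤ ∫ q in a..m, M * (r - q) ^ (-(1 + α)) :=
        intervalIntegral.norm_integral_le_of_norm_le ham (ae_of_all _ hbound)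
          ((hkernel.intervalIntegrable_of_Icc ham).const_mul M)
    _ ≤ M * (r - m) ^ (-α) / α := by
        rw [intervalIntegral.integral_const_mul, mul_div_assoc]
        exact mul_le_mul_of_nonneg_left (integral_sub_rpow_neg_one_sub_le hα ham hmr) hM0

theorem intervalIntegrable_and_norm_integral_le_of_holder {u : ℝ → V} {α β m r L : ℝ}
    (hαβ : α < β) (hmr : m ≤ r) (hu : ContinuousOn u (Icc m r))
    (hL : ∀ q ∈ Ioo m r, ‖u r - u q‖ ≤ L * (r - q) ^ β) :
    IntervalIntegrable (fun q => (r - q) ^ (-(1 + α)) • (u r - u q)) volume m r ∧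
      ‖∫ q in m..r, (r - q) ^ (-(1 + α)) • (u r - u q)‖ ≤ L * (r - m) ^ (β - α) / (β - α) := by
  have hγ : -1 < β - (1 + α) := by linarith
  have hdom := (intervalIntegrable_sub_rpow hγ m r).const_mul L
  have hbound : ∀ᵐ q, q ∈ Ioc m r →
      ‖(r - q) ^ (-(1 + α)) • (u r - u q)‖ ≤ L * (r - q) ^ (β - (1 + α)) := by
    filter_upwards [volume.ae_ne r] with q hqr hq
    have hrq : 0 < r - q := sub_pos.2 (lt_of_le_of_ne hq.2 hqr)
    rw [norm_smul_of_nonneg (rpow_nonneg hrq.le _), show β - (1 + α) = β + -(1 + α) by ring,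
      rpow_add hrq]
    calc (r - q) ^ (-(1 + α)) * ‖u r - u q‖ ≤ (r - q) ^ (-(1 + α)) * (L * (r - q) ^ β) :=
          mul_le_mul_of_nonneg_left (hL q ⟨hq.1, lt_of_le_of_ne hq.2 hqr⟩) (rpow_nonneg hrq.le _)
      _ = L * ((r - q) ^ β * (r - q) ^ (-(1 + α))) := by ring
  have hmeas : AEStronglyMeasurable (fun q => (r - q) ^ (-(1 + α)) • (u r - u q))
      (volume.restrict (uIoc m r)) := by
    rw [uIoc_of_le hmr]
    exact (measurable_const.sub measurable_id).pow_const _ |>.aestronglyMeasurable.smul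
      ((continuousOn_const.sub hu).mono Ioc_subset_Icc_self
        |>.aestronglyMeasurable measurableSet_Ioc)
  refine ⟨hdom.mono_fun' hmeas ?_, ?_⟩
  · rw [uIoc_of_le hmr]
    exact (ae_restrict_iff' measurableSet_Ioc).2 hbound
  · calc ‖∫ q in m..r, (r - q) ^ (-(1 + α)) • (u r - u q)‖
        ≤ ∫ q in m..r, L * (r - q) ^ (β - (1 + α)) :=
          intervalIntegral.norm_integral_le_of_norm_le hmr hbound hdom
      _ = L * (r - m) ^ (β - α) / (β - α) := by
          rw [intervalIntegral.integral_const_mul, integral_sub_rpow hγ,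
            show β - (1 + α) + 1 = β - α by ring, mul_div_assoc]

theorem intervalIntegrable_and_norm_integral_le_of_weighted_holder {u : ℝ → V}
    {α β T K s r : ℝ} (hα : 0 < α) (hαβ : α < β) (hu : ContinuousOn u (Icc 0 T))
    (hsup : ∀ t ∈ Icc 0 T, ‖u t‖ ≤ K)
    (hhol : ∀ s t, 0 < s → s < t → t ≤ T → s ^ β * ‖u t - u s‖ ≤ K * (t - s) ^ β)
    (hs : 0 ≤ s) (hsr : s < r) (hrT : r ≤ T) :
    IntervalIntegrable (fun q => (r - q) ^ (-(1 + α)) • (u r - u q)) volume s r ∧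
      ‖∫ q in s..r, (r - q) ^ (-(1 + α)) • (u r - u q)‖
        ≤ (2 / α + 1 / (β - α)) * K * (r - max s (r / 2)) ^ (-α) := by
  set m := max s (r / 2)
  have hsm : s ≤ m := le_max_left _ _
  have hmr : m < r := max_lt hsr (by linarith)
  have hm : 0 < m := lt_max_of_lt_right (by linarith)
  have hrm : r - m ≤ m := by linarith [le_max_right s (r / 2)]
  have hur := hsup r ⟨by linarith, hrT⟩
  obtain ⟨hint₁, hnorm₁⟩ :=
    intervalIntegrable_and_norm_integral_le_of_bounded (M := K + K) hα hsm hmr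
      (hu.mono (Icc_subset_Icc hs (by linarith)))
      fun q hq => norm_sub_le_of_le hur (hsup q ⟨hs.trans hq.1, by linarith [hq.2]⟩)
  obtain ⟨hint₂, hnorm₂⟩ :=
    intervalIntegrable_and_norm_integral_le_of_holder (L := K * m ^ (-β)) hαβ hmr.le
      (hu.mono (Icc_subset_Icc hm.le hrT)) fun q hq => by
        rw [mul_right_comm]
        exact le_mul_rpow_neg_of_rpow_mul_le (by linarith) hm hq.1.le (norm_nonneg _)
          (hhol q r (hm.trans hq.1) hq.2 hrT)
  refine ⟨hint₁.trans hint₂, ?_⟩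
  have hK : 0 ≤ K := (norm_nonneg _).trans hur
  have hkernel := rpow_neg_mul_rpow_sub_le (α := α) (β := β) (by linarith) (sub_pos.2 hmr) hrm
  rw [← intervalIntegral.integral_add_adjacent_intervals hint₁ hint₂]
  calc _ ≤ _ := norm_add_le _ _
    _ ≤ (K + K) * (r - m) ^ (-α) / α + K * m ^ (-β) * (r - m) ^ (β - α) / (β - α) :=
        add_le_add hnorm₁ hnorm₂
    _ ≤ (K + K) * (r - m) ^ (-α) / α + K * (r - m) ^ (-α) / (β - α) := by
        rw [mul_assoc K]
        gcongr
    _ = (2 / α + 1 / (β - α)) * K * (r - m) ^ (-α) := by ring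

end

theorem stmt_16_general (α β T : ℝ) (hα0 : 0 < α) (hαβ : α < β) (hβ1 : β ≤ 1)
    {V : Type*} [NormedAddCommGroup V] [NormedSpace ℝ V] :
    ∃ c : ℝ, 0 < c ∧ ∀ (u : ℝ → V) (K : ℝ), ContinuousOn u (Set.Icc 0 T) →
      (∀ t ∈ Set.Icc (0:ℝ) T, ‖u t‖ ≤ K) →
      (∀ s t : ℝ, 0 < s → s < t → t ≤ T → s ^ β * ‖u t - u s‖ ≤ K * (t - s) ^ β) →
      ∀ s r : ℝ, 0 ≤ s → s < r → r ≤ T →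
        IntervalIntegrable (fun q => ((r - q) ^ (-(1 + α))) • (u r - u q))
          MeasureTheory.volume s r ∧
        ‖(1 / Real.Gamma (1 - α)) •
            (((r - s) ^ (-α)) • u r + α • ∫ q in s..r, ((r - q) ^ (-(1 + α))) • (u r - u q))‖
          ≤ c * K * (r - s) ^ (-α) := by
  have hΓ : 0 < Gamma (1 - α) := Gamma_pos_of_pos (by linarith)
  have hβα : 0 < β - α := by linarith
  refine ⟨1 / Gamma (1 - α) * (1 + α * (2 / α + 1 / (β - α)) * 2 ^ α), by positivity, ?_⟩
  intro u K hu hsup hhol s r hs hsr hrT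
  obtain ⟨hint, hnorm⟩ :=
    intervalIntegrable_and_norm_integral_le_of_weighted_holder hα0 hαβ hu hsup hhol hs hsr hrT
  refine ⟨hint, ?_⟩
  have hur := hsup r ⟨by linarith, hrT⟩
  have hK : 0 ≤ K := (norm_nonneg _).trans hur
  have hrs : 0 ≤ (r - s) ^ (-α) := rpow_nonneg (by linarith) _
  have hdist := rpow_neg_sub_max_half_le hα0.le hs hsr
  rw [norm_smul_of_nonneg (by positivity)]
  calc _ ≤ 1 / Gamma (1 - α) * ((r - s) ^ (-α) * K
          + α * ((2 / α + 1 / (β - α)) * K * (2 ^ α * (r - s) ^ (-α)))) := by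
        gcongr
        refine (norm_add_le _ _).trans (add_le_add ?_ ?_)
        · rw [norm_smul_of_nonneg hrs]; gcongr
        · rw [norm_smul_of_nonneg hα0.le]
          gcongr
          exact hnorm.trans (by gcongr)
    _ = _ := by ring

/-- For 0 < α < β ≤ 1, u ∈ C_{β,∼}([0,T];V) (with K bounding both the sup norm and the weighted
Hölder seminorm) and 0 ≤ s < r ≤ T, the fractional derivative
D^α_{s+}u[r] = (1/Γ(1-α))( u(r)/(r-s)^α + α ∫_s^r (u(r)-u(q))/(r-q)^{1+α} dq )
is well defined and |D^α_{s+}u[r]| ≤ c K (r-s)^{-α}, with c depending only on α, β, T. -/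
theorem stmt_16 (α β T : ℝ) (hα0 : 0 < α) (hαβ : α < β) (hβ1 : β ≤ 1) (hT : 0 < T)
    {V : Type*} [NormedAddCommGroup V] [NormedSpace ℝ V] [CompleteSpace V] :
    ∃ c : ℝ, 0 < c ∧ ∀ (u : ℝ → V) (K : ℝ), ContinuousOn u (Set.Icc 0 T) →
      (∀ t ∈ Set.Icc (0:ℝ) T, ‖u t‖ ≤ K) →
      (∀ s t : ℝ, 0 < s → s < t → t ≤ T → s ^ β * ‖u t - u s‖ ≤ K * (t - s) ^ β) →
      ∀ s r : ℝ, 0 ≤ s → s < r → r ≤ T →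
        IntervalIntegrable (fun q => ((r - q) ^ (-(1 + α))) • (u r - u q))
          MeasureTheory.volume s r ∧
        ‖(1 / Real.Gamma (1 - α)) •
            (((r - s) ^ (-α)) • u r + α • ∫ q in s..r, ((r - q) ^ (-(1 + α))) • (u r - u q))‖
          ≤ c * K * (r - s) ^ (-α) :=
  stmt_16_general α β T hα0 hαβ hβ1
end

section
/- Let 1/3 < β < β' < 1/2, α with β < α < 2β, T > 0, u ∈ C_{β,∼}([0,T]; V), and G : V → L₂(V, V̂) twice Fréchet differentiable with ‖DG‖ ≤ c_{DG}, ‖D²G‖ ≤ c_{D²G} and c_G = ‖G(0)‖. Then the compensated fractional derivative D̂^α_{s+}G(u(·))[r] = (1/Γ(1-α))( G(u(r))/(r-s)^α + α∫_s^r (G(u(r)) - G(u(q)) - DG(u(q))(u(r)-u(q)))/(r-q)^{1+α} dq ) satisfies ‖D̂^α_{s+}G(u(·))[r]‖_{L₂(V,V̂)} ≤ c (1 + ‖u‖²_{β,∼}) (r-s)^{-α} for all 0 ≤ s < r ≤ T, where c depends on α, β, T, c_G, c_{DG}, c_{D²G}. -/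
/-!
The compensated integrand is the second-order Taylor remainder of `G` along `u`, so it is
bounded by `c_{D²G} ‖u(r) - u(q)‖²`; the weighted Hölder bound turns this into
`c_{D²G} K² (q - s)^{-2β} (r - q)^{2β-1-α}`. Since `α < 2β < 1` both exponents exceed `-1`,
and the resulting Beta-type integral scales like `(r - s)^{-α}`. The uncompensated term
`G(u(r)) (r - s)^{-α}` is handled by the linear growth `‖G v‖ ≤ c_G + c_{DG} ‖v‖`.
-/

open Set MeasureTheory intervalIntegral

theorem intervalIntegrable_and_norm_integral_le_of_forall_Ioo {E : Type*}
    [NormedAddCommGroup E] [NormedSpace ℝ E] {f : ℝ → E} {g : ℝ → ℝ} {s r : ℝ}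
    (hsr : s ≤ r) (hf : ContinuousOn f (Ioo s r)) (hg : IntervalIntegrable g volume s r)
    (hfg : ∀ q ∈ Ioo s r, ‖f q‖ ≤ g q) :
    IntervalIntegrable f volume s r ∧ ‖∫ q in s..r, f q‖ ≤ ∫ q in s..r, g q := by
  have hIoo : volume.restrict (uIoc s r) = volume.restrict (Ioo s r) := by
    rw [uIoc_of_le hsr, Measure.restrict_congr_set Ioo_ae_eq_Ioc]
  have hfg_ae : ∀ᵐ q ∂volume.restrict (uIoc s r), ‖f q‖ ≤ g q := by
    rw [hIoo]; exact ae_restrict_of_forall_mem measurableSet_Ioo hfg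
  refine ⟨hg.mono_fun' (hIoo ▸ hf.aestronglyMeasurable measurableSet_Ioo) hfg_ae, ?_⟩
  rw [uIoc_of_le hsr] at hfg_ae
  exact norm_integral_le_of_norm_le hsr ((ae_restrict_iff' measurableSet_Ioc).mp hfg_ae) hg

theorem rpow_mul_rpow_le_of_nonpos {a b x y : ℝ} (ha : a ≤ 0) (hb : b ≤ 0)
    (hx : 0 < x) (hy : 0 < y) :
    x ^ a * y ^ b ≤ 2 ^ (-b) * (x + y) ^ b * x ^ a + 2 ^ (-a) * (x + y) ^ a * y ^ b := by
  have half_pow (c : ℝ) : ((x + y) / 2) ^ c = 2 ^ (-c) * (x + y) ^ c := by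
    rw [Real.div_rpow (by positivity) (by norm_num), Real.rpow_neg (by norm_num)]; ring
  have hxa : 0 ≤ x ^ a := by positivity
  have hyb : 0 ≤ y ^ b := by positivity
  have hxya : 0 ≤ 2 ^ (-a) * (x + y) ^ a := by positivity
  have hxyb : 0 ≤ 2 ^ (-b) * (x + y) ^ b := by positivity
  rcases le_total x y with hxy | hxy
  · have : y ^ b ≤ 2 ^ (-b) * (x + y) ^ b :=
      half_pow b ▸ Real.rpow_le_rpow_of_nonpos (by positivity) (by linarith) hb
    linarith [mul_le_mul_of_nonneg_left this hxa, mul_nonneg hxya hyb]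
  · have : x ^ a ≤ 2 ^ (-a) * (x + y) ^ a :=
      half_pow a ▸ Real.rpow_le_rpow_of_nonpos (by positivity) (by linarith) ha
    linarith [mul_le_mul_of_nonneg_right this hyb, mul_nonneg hxyb hxa]

theorem integral_rpow_sub_left {a s r : ℝ} (ha : -1 < a) :
    ∫ q in s..r, (q - s) ^ a = (r - s) ^ (a + 1) / (a + 1) := by
  rw [integral_comp_sub_right (· ^ a), integral_rpow (Or.inl ha), sub_self,
    Real.zero_rpow (by linarith), sub_zero]

theorem integral_rpow_sub_right {b s r : ℝ} (hb : -1 < b) :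
    ∫ q in s..r, (r - q) ^ b = (r - s) ^ (b + 1) / (b + 1) := by
  rw [integral_comp_sub_left (· ^ b), integral_symm, integral_rpow (Or.inl hb), sub_self,
    Real.zero_rpow (by linarith)]
  ring

/-- An upper bound for the Beta function `B(a + 1, b + 1)` when `a, b ≤ 0`: on each half of the
interval one of the two factors is at most its value at the midpoint. -/
noncomputable def betaBound (a b : ℝ) : ℝ := 2 ^ (-b) / (a + 1) + 2 ^ (-a) / (b + 1)

theorem betaBound_pos {a b : ℝ} (ha : -1 < a) (hb : -1 < b) : 0 < betaBound a b :=
  add_pos (div_pos (by positivity) (by linarith)) (div_pos (by positivity) (by linarith))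

theorem intervalIntegrable_and_integral_rpow_mul_rpow_le {a b s r : ℝ} (ha : -1 < a)
    (ha0 : a ≤ 0) (hb : -1 < b) (hb0 : b ≤ 0) (hsr : s < r) :
    IntervalIntegrable (fun q => (q - s) ^ a * (r - q) ^ b) volume s r ∧
      ∫ q in s..r, (q - s) ^ a * (r - q) ^ b ≤ betaBound a b * (r - s) ^ (a + b + 1) := by
  have hleft : IntervalIntegrable (fun q => (q - s) ^ a) volume s r := by
    simpa using (intervalIntegrable_rpow' ha (a := 0) (b := r - s)).comp_sub_right s
  have hright : IntervalIntegrable (fun q => (r - q) ^ b) volume s r := by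
    simpa using ((intervalIntegrable_rpow' hb (a := 0) (b := r - s)).comp_sub_left r).symm
  have hcont : ContinuousOn (fun q => (q - s) ^ a * (r - q) ^ b) (Ioo s r) := by
    refine ContinuousOn.mul ?_ ?_ <;> refine ContinuousOn.rpow_const (by fun_prop) ?_ <;>
      intro q hq <;> left <;> linarith [hq.1, hq.2]
  obtain ⟨hint, hle⟩ := intervalIntegrable_and_norm_integral_le_of_forall_Ioo hsr.le hcont
    ((hleft.const_mul (2 ^ (-b) * (r - s) ^ b)).add (hright.const_mul (2 ^ (-a) * (r - s) ^ a)))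
    (fun q hq => by
      have := rpow_mul_rpow_le_of_nonpos ha0 hb0 (sub_pos.2 hq.1) (sub_pos.2 hq.2)
      rw [sub_add_sub_cancel'] at this
      rwa [Real.norm_of_nonneg (mul_nonneg (Real.rpow_nonneg (sub_pos.2 hq.1).le _)
        (Real.rpow_nonneg (sub_pos.2 hq.2).le _))])
  refine ⟨hint, (le_abs_self _).trans (hle.trans_eq ?_)⟩
  have hrs : 0 < r - s := sub_pos.2 hsr
  rw [integral_add (hleft.const_mul _) (hright.const_mul _), intervalIntegral.integral_const_mul,
    intervalIntegral.integral_const_mul, integral_rpow_sub_left ha, integral_rpow_sub_right hb]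
  have e1 : (r - s) ^ b * (r - s) ^ (a + 1) = (r - s) ^ (a + b + 1) := by
    rw [← Real.rpow_add hrs]; ring_nf
  have e2 : (r - s) ^ a * (r - s) ^ (b + 1) = (r - s) ^ (a + b + 1) := by
    rw [← Real.rpow_add hrs]; ring_nf
  rw [betaBound]
  linear_combination 2 ^ (-b) / (a + 1) * e1 + 2 ^ (-a) / (b + 1) * e2

theorem sq_norm_sub_le_of_weighted_holder {V : Type*} [NormedAddCommGroup V] {u : ℝ → V}
    {β K T q r : ℝ}
    (hu : ∀ s t : ℝ, 0 < s → s < t → t ≤ T → s ^ β * ‖u t - u s‖ ≤ K * (t - s) ^ β)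
    (hq : 0 < q) (hqr : q < r) (hrT : r ≤ T) :
    ‖u r - u q‖ ^ 2 ≤ K ^ 2 * (r - q) ^ (2 * β) / q ^ (2 * β) := by
  have h : ‖u r - u q‖ ≤ K * (r - q) ^ β / q ^ β := by
    rw [le_div_iff₀ (by positivity), mul_comm]
    exact hu q r hq hqr hrT
  calc ‖u r - u q‖ ^ 2 ≤ (K * (r - q) ^ β / q ^ β) ^ 2 := by gcongr
    _ = K ^ 2 * (r - q) ^ (2 * β) / q ^ (2 * β) := by
      rw [mul_comm 2 β, Real.rpow_mul (sub_pos.2 hqr).le, Real.rpow_mul hq.le, Real.rpow_two,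
        Real.rpow_two]
      ring

section

variable {V W : Type*} [NormedAddCommGroup V] [NormedSpace ℝ V] [NormedAddCommGroup W]
  [NormedSpace ℝ W] {G : V → W} {DG : V → V →L[ℝ] W} {D2G : V → V →L[ℝ] V →L[ℝ] W} {C : ℝ}
  {u : ℝ → V} {α β K T q s r : ℝ}

theorem norm_le_norm_zero_add_of_hasFDerivAt (hG : ∀ v, HasFDerivAt G (DG v) v)
    (hDG : ∀ v, ‖DG v‖ ≤ C) (x : V) :
    ‖G x‖ ≤ ‖G 0‖ + C * ‖x‖ := by
  have hlip : ‖G x - G 0‖ ≤ C * ‖x - 0‖ :=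
    convex_univ.norm_image_sub_le_of_norm_hasFDerivWithin_le
      (fun v _ => (hG v).hasFDerivWithinAt) (fun v _ => hDG v) trivial trivial
  rw [sub_zero] at hlip
  linarith [norm_le_insert' (G x) (G 0)]

theorem norm_sub_sub_fderiv_le (hG : ∀ v, HasFDerivAt G (DG v) v)
    (hDG : ∀ v, HasFDerivAt DG (D2G v) v) (hD2G : ∀ v, ‖D2G v‖ ≤ C) (x y : V) :
    ‖G y - G x - DG x (y - x)‖ ≤ C * ‖y - x‖ ^ 2 := by
  have hDG_lip : ∀ v ∈ Metric.closedBall x ‖y - x‖, ‖DG v - DG x‖ ≤ C * ‖y - x‖ := by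
    intro v hv
    have hC : 0 ≤ C := (norm_nonneg (D2G x)).trans (hD2G x)
    calc ‖DG v - DG x‖ ≤ C * ‖v - x‖ :=
          convex_univ.norm_image_sub_le_of_norm_hasFDerivWithin_le
            (fun w _ => (hDG w).hasFDerivWithinAt) (fun w _ => hD2G w) trivial trivial
      _ ≤ C * ‖y - x‖ := by gcongr; rwa [← dist_eq_norm]
  calc ‖G y - G x - DG x (y - x)‖ ≤ C * ‖y - x‖ * ‖y - x‖ :=
        (convex_closedBall x _).norm_image_sub_le_of_norm_hasFDerivWithin_le'
          (fun v _ => (hG v).hasFDerivWithinAt) hDG_lip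
          (Metric.mem_closedBall_self (norm_nonneg _)) (by simp [dist_eq_norm])
    _ = C * ‖y - x‖ ^ 2 := by ring

theorem norm_rpow_smul_remainder_le
    (hG : ∀ v, HasFDerivAt G (DG v) v) (hDG : ∀ v, HasFDerivAt DG (D2G v) v)
    (hD2G : ∀ v, ‖D2G v‖ ≤ C)
    (hu : ∀ s t : ℝ, 0 < s → s < t → t ≤ T → s ^ β * ‖u t - u s‖ ≤ K * (t - s) ^ β)
    (hβ : 0 ≤ β) (hs : 0 ≤ s) (hq : q ∈ Ioo s r) (hrT : r ≤ T) :
    ‖(r - q) ^ (-(1 + α)) • (G (u r) - G (u q) - DG (u q) (u r - u q))‖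
      ≤ C * K ^ 2 * ((q - s) ^ (-(2 * β)) * (r - q) ^ (2 * β - 1 - α)) := by
  have hqs : 0 < q - s := sub_pos.2 hq.1
  have hrq : 0 < r - q := sub_pos.2 hq.2
  have hC : 0 ≤ C := (norm_nonneg (D2G 0)).trans (hD2G 0)
  have hweight : 1 / q ^ (2 * β) ≤ (q - s) ^ (-(2 * β)) := by
    rw [Real.rpow_neg hqs.le, one_div]
    gcongr
    linarith
  calc ‖(r - q) ^ (-(1 + α)) • (G (u r) - G (u q) - DG (u q) (u r - u q))‖
      ≤ (r - q) ^ (-(1 + α)) * (C * ‖u r - u q‖ ^ 2) := by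
        rw [norm_smul, Real.norm_of_nonneg (by positivity)]
        gcongr
        exact norm_sub_sub_fderiv_le hG hDG hD2G _ _
    _ ≤ (r - q) ^ (-(1 + α)) * (C * (K ^ 2 * (r - q) ^ (2 * β) / q ^ (2 * β))) := by
        gcongr
        exact sq_norm_sub_le_of_weighted_holder hu (by linarith [hq.1]) hq.2 hrT
    _ = C * K ^ 2 * (1 / q ^ (2 * β) * ((r - q) ^ (-(1 + α)) * (r - q) ^ (2 * β))) := by ring
    _ ≤ C * K ^ 2 * ((q - s) ^ (-(2 * β)) * (r - q) ^ (2 * β - 1 - α)) := by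
        rw [← Real.rpow_add hrq, show -(1 + α) + 2 * β = 2 * β - 1 - α by ring]
        gcongr

theorem continuousOn_rpow_smul_remainder (hG : ∀ v, HasFDerivAt G (DG v) v)
    (hDG : ∀ v, HasFDerivAt DG (D2G v) v) (hu : ContinuousOn u (Icc 0 T)) (hs : 0 ≤ s)
    (hrT : r ≤ T) :
    ContinuousOn (fun q => (r - q) ^ (-(1 + α)) • (G (u r) - G (u q) - DG (u q) (u r - u q)))
      (Ioo s r) := by
  have hGc : Continuous G := continuous_iff_continuousAt.2 fun v => (hG v).continuousAt
  have hDGc : Continuous DG := continuous_iff_continuousAt.2 fun v => (hDG v).continuousAt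
  have huc : ContinuousOn u (Ioo s r) :=
    hu.mono fun q hq => ⟨hs.trans hq.1.le, hq.2.le.trans hrT⟩
  refine ContinuousOn.smul ?_ (continuousOn_const.sub (hGc.comp_continuousOn huc) |>.sub
    ((hDGc.comp_continuousOn huc).clm_apply (continuousOn_const.sub huc)))
  exact ContinuousOn.rpow_const (by fun_prop) fun q hq => Or.inl (sub_pos.2 hq.2).ne'

theorem intervalIntegrable_and_norm_integral_rpow_smul_remainder_le
    (hG : ∀ v, HasFDerivAt G (DG v) v) (hDG : ∀ v, HasFDerivAt DG (D2G v) v)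
    (hD2G : ∀ v, ‖D2G v‖ ≤ C) (hu_cont : ContinuousOn u (Icc 0 T))
    (hu : ∀ s t : ℝ, 0 < s → s < t → t ≤ T → s ^ β * ‖u t - u s‖ ≤ K * (t - s) ^ β)
    (hα₀ : 0 ≤ α) (hα : α < 2 * β) (h2β : 2 * β < 1) (hs : 0 ≤ s) (hsr : s < r)
    (hrT : r ≤ T) :
    IntervalIntegrable
        (fun q => (r - q) ^ (-(1 + α)) • (G (u r) - G (u q) - DG (u q) (u r - u q))) volume s r ∧
      ‖∫ q in s..r, (r - q) ^ (-(1 + α)) • (G (u r) - G (u q) - DG (u q) (u r - u q))‖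
        ≤ C * K ^ 2 * betaBound (-(2 * β)) (2 * β - 1 - α) * (r - s) ^ (-α) := by
  obtain ⟨hkernel, hkernel_le⟩ := intervalIntegrable_and_integral_rpow_mul_rpow_le
    (a := -(2 * β)) (b := 2 * β - 1 - α) (by linarith) (by linarith) (by linarith)
    (by linarith) hsr
  have hC : 0 ≤ C := (norm_nonneg (D2G 0)).trans (hD2G 0)
  obtain ⟨hint, hle⟩ := intervalIntegrable_and_norm_integral_le_of_forall_Ioo hsr.le
    (continuousOn_rpow_smul_remainder hG hDG hu_cont hs hrT) (hkernel.const_mul (C * K ^ 2))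
    fun q hq => norm_rpow_smul_remainder_le hG hDG hD2G hu (by linarith) hs hq hrT
  refine ⟨hint, hle.trans ?_⟩
  rw [intervalIntegral.integral_const_mul, mul_assoc (C * K ^ 2),
    show (-α) = -(2 * β) + (2 * β - 1 - α) + 1 by ring]
  gcongr

end

theorem stmt_18_general (β β' α T cG cDG cD2G : ℝ)
    (hββ' : β < β') (hβ'u : β' < 1/2)
    (hαl : β < α) (hαu : α < 2 * β)
    (hcG : 0 ≤ cG) (hcDG : 0 ≤ cDG) (hcD2G : 0 ≤ cD2G)
    {V W : Type*} [NormedAddCommGroup V] [InnerProductSpace ℝ V]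
    [NormedAddCommGroup W] [NormedSpace ℝ W] :
    ∃ c : ℝ, 0 < c ∧ ∀ (G : V → W) (DG : V → V →L[ℝ] W) (D2G : V → V →L[ℝ] V →L[ℝ] W),
      (∀ v, HasFDerivAt G (DG v) v) → (∀ v, HasFDerivAt DG (D2G v) v) →
      ‖G 0‖ ≤ cG → (∀ v, ‖DG v‖ ≤ cDG) → (∀ v, ‖D2G v‖ ≤ cD2G) →
      ∀ (u : ℝ → V) (K : ℝ), ContinuousOn u (Set.Icc 0 T) →
        (∀ t ∈ Set.Icc (0:ℝ) T, ‖u t‖ ≤ K) →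
        (∀ s t : ℝ, 0 < s → s < t → t ≤ T → s ^ β * ‖u t - u s‖ ≤ K * (t - s) ^ β) →
        ∀ s r : ℝ, 0 ≤ s → s < r → r ≤ T →
          IntervalIntegrable
            (fun q => ((r - q) ^ (-(1 + α))) • (G (u r) - G (u q) - DG (u q) (u r - u q)))
            MeasureTheory.volume s r ∧
          ‖(1 / Real.Gamma (1 - α)) • (((r - s) ^ (-α)) • G (u r)
              + α • ∫ q in s..r,
                  ((r - q) ^ (-(1 + α))) • (G (u r) - G (u q) - DG (u q) (u r - u q)))‖
            ≤ c * (1 + K ^ 2) * (r - s) ^ (-α) := by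
  have hα : 0 < α := by linarith
  set B := betaBound (-(2 * β)) (2 * β - 1 - α)
  have hB : 0 < B := betaBound_pos (by linarith) (by linarith)
  have hΓ : 0 < Real.Gamma (1 - α) := Real.Gamma_pos_of_pos (by linarith)
  refine ⟨(1 + cG + cDG + α * cD2G * B) / Real.Gamma (1 - α), by positivity, ?_⟩
  intro G DG D2G hG hDG hG0 hDG_le hD2G_le u K hu_cont hu_le hu s r hs hsr hrT
  obtain ⟨hint, hI⟩ := intervalIntegrable_and_norm_integral_rpow_smul_remainder_le hG hDG
    hD2G_le hu_cont hu hα.le hαu (by linarith) hs hsr hrT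
  refine ⟨hint, ?_⟩
  have hGu : ‖G (u r)‖ ≤ cG + cDG * K :=
    (norm_le_norm_zero_add_of_hasFDerivAt hG hDG_le (u r)).trans
      (add_le_add hG0 (mul_le_mul_of_nonneg_left (hu_le r ⟨by linarith, hrT⟩) hcDG))
  have hconst : cG + cDG * K + α * cD2G * B * K ^ 2
      ≤ (1 + cG + cDG + α * cD2G * B) * (1 + K ^ 2) := by
    nlinarith [sq_nonneg K, mul_nonneg hcG (sq_nonneg K), mul_nonneg hcDG (sq_nonneg K),
      mul_nonneg hcDG (sq_nonneg (K - 1)), mul_nonneg (mul_nonneg hα.le hcD2G) hB.le]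
  set P := (r - s) ^ (-α)
  have hP : 0 < P := Real.rpow_pos_of_pos (sub_pos.2 hsr) _
  calc _ ≤ 1 / Real.Gamma (1 - α) * (P * ‖G (u r)‖ + α * ‖∫ q in s..r,
          (r - q) ^ (-(1 + α)) • (G (u r) - G (u q) - DG (u q) (u r - u q))‖) := by
        rw [norm_smul, Real.norm_of_nonneg (by positivity)]
        gcongr
        refine (norm_add_le _ _).trans_eq ?_
        rw [norm_smul, norm_smul, Real.norm_of_nonneg hP.le, Real.norm_of_nonneg hα.le]
    _ ≤ 1 / Real.Gamma (1 - α) * (P * (cG + cDG * K) + α * (cD2G * K ^ 2 * B * P)) := by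
        gcongr
    _ = (cG + cDG * K + α * cD2G * B * K ^ 2) / Real.Gamma (1 - α) * P := by ring
    _ ≤ _ := by
        gcongr
        rw [div_mul_eq_mul_div]
        gcongr

/-- Compensated fractional derivative estimate: for 1/3 < β < β' < 1/2, β < α < 2β, and
G : V → L₂(V,V̂) (codomain modeled as a Banach space W) twice differentiable with
‖G(0)‖ ≤ c_G, ‖DG‖ ≤ c_{DG}, ‖D²G‖ ≤ c_{D²G}, and u ∈ C_{β,∼}([0,T];V) with constant K,
the compensated derivative D̂^α_{s+}G(u(·))[r] is well defined and bounded by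
c (1 + K²)(r-s)^{-α}, with c depending only on α, β, T, c_G, c_{DG}, c_{D²G}. -/
theorem stmt_18 (β β' α T cG cDG cD2G : ℝ)
    (hβl : 1/3 < β) (hββ' : β < β') (hβ'u : β' < 1/2)
    (hαl : β < α) (hαu : α < 2 * β) (hT : 0 < T)
    (hcG : 0 ≤ cG) (hcDG : 0 ≤ cDG) (hcD2G : 0 ≤ cD2G)
    {V W : Type*} [NormedAddCommGroup V] [InnerProductSpace ℝ V] [CompleteSpace V]
    [NormedAddCommGroup W] [NormedSpace ℝ W] [CompleteSpace W] :
    ∃ c : ℝ, 0 < c ∧ ∀ (G : V → W) (DG : V → V →L[ℝ] W) (D2G : V → V →L[ℝ] V →L[ℝ] W),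
      (∀ v, HasFDerivAt G (DG v) v) → (∀ v, HasFDerivAt DG (D2G v) v) →
      ‖G 0‖ ≤ cG → (∀ v, ‖DG v‖ ≤ cDG) → (∀ v, ‖D2G v‖ ≤ cD2G) →
      ∀ (u : ℝ → V) (K : ℝ), ContinuousOn u (Set.Icc 0 T) →
        (∀ t ∈ Set.Icc (0:ℝ) T, ‖u t‖ ≤ K) →
        (∀ s t : ℝ, 0 < s → s < t → t ≤ T → s ^ β * ‖u t - u s‖ ≤ K * (t - s) ^ β) →
        ∀ s r : ℝ, 0 ≤ s → s < r → r ≤ T →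
          IntervalIntegrable
            (fun q => ((r - q) ^ (-(1 + α))) • (G (u r) - G (u q) - DG (u q) (u r - u q)))
            MeasureTheory.volume s r ∧
          ‖(1 / Real.Gamma (1 - α)) • (((r - s) ^ (-α)) • G (u r)
              + α • ∫ q in s..r,
                  ((r - q) ^ (-(1 + α))) • (G (u r) - G (u q) - DG (u q) (u r - u q)))‖
            ≤ c * (1 + K ^ 2) * (r - s) ^ (-α) :=
  stmt_18_general β β' α T cG cDG cD2G hββ' hβ'u hαl hαu hcG hcDG hcD2G
end
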